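/- (Proposition 3.4, equation (3.14).) For every X ∈ V one has Ric(X, ξ) = −(2n(α₀² + β₀²) − dβ(ξ))η(X) + (2n−1)dβ(X) − dα(φX). -/

import Mathlib

/-!
Evaluating the curvature identity at `R(Z, X)ξ` writes `Z ↦ R(Z, X)ξ` as a combination of the
identity, `φ`, `φ²` and rank-one maps, so `Ric(X, ξ)` only needs their traces. The metric
compatibility `g(φX, φY) = -g(X, Y) + η(X)η(Y)` makes `φ` skew-adjoint for the nondegenerate
form `g`, hence traceless, and `φ² = id - η ⊗ ξ` has trace `dim V - 1 = 2n`.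
-/

/-- The Ricci tensor: `Ric R Y Z` is the trace of the linear map `X ↦ R X Y Z`. -/
noncomputable def Ric {V : Type*} [AddCommGroup V] [Module ℝ V]
    (R : V →ₗ[ℝ] V →ₗ[ℝ] V →ₗ[ℝ] V) (Y Z : V) : ℝ :=
  LinearMap.trace ℝ V ((LinearMap.applyₗ Z).comp (R.flip Y))

namespace LinearMap.BilinForm

variable {K V : Type*} [Field K] [CharZero K] [AddCommGroup V] [Module K V]
  [FiniteDimensional K V]

/-- Via the isomorphism `V ≃ V^*` given by `B`, a skew-adjoint `f` is conjugate to `-fᵀ`. -/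
theorem trace_eq_zero_of_isSkewAdjoint {B : LinearMap.BilinForm K V} (hB : B.Nondegenerate)
    {f : Module.End K V} (hf : B.IsSkewAdjoint f) : LinearMap.trace K V f = 0 := by
  set e := B.toDual hB
  have htranspose : ∀ x, Module.Dual.transpose (R := K) f (e x) = e (-f x) := by
    intro x
    ext y
    rw [Module.Dual.transpose_apply, LinearMap.comp_apply, map_neg, LinearMap.neg_apply,
      toDual_def, toDual_def, hf x y, Pi.neg_apply, map_neg, neg_neg]
  have hconj : e.symm.conj (Module.Dual.transpose (R := K) f) = -f := by
    ext x
    simp [LinearEquiv.conj_apply, htranspose]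
  have htrace := congrArg (LinearMap.trace K V) hconj
  rw [map_neg, LinearMap.trace_conj', LinearMap.trace_transpose'] at htrace
  exact CharZero.eq_neg_self_iff.mp htrace

end LinearMap.BilinForm

section AlmostParacontactMetric

variable {V : Type*} [AddCommGroup V] [Module ℝ V]
  {g : LinearMap.BilinForm ℝ V} {φ : V →ₗ[ℝ] V} {ξ : V} {η : V →ₗ[ℝ] ℝ}

theorem apply_reeb_eq_of_paracontact (hφξ : φ ξ = 0) (hηξ : η ξ = 1)
    (hgφ : ∀ X Y : V, g (φ X) (φ Y) = - g X Y + η X * η Y) (X : V) : g X ξ = η X := by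
  have h := hgφ X ξ
  rw [hφξ, hηξ, map_zero, mul_one] at h
  linarith

theorem isSkewAdjoint_of_paracontact (hφξ : φ ξ = 0) (hηφ : ∀ X : V, η (φ X) = 0)
    (hηξ : η ξ = 1) (hφ2 : ∀ X : V, φ (φ X) = X - η X • ξ)
    (hgφ : ∀ X Y : V, g (φ X) (φ Y) = - g X Y + η X * η Y) : g.IsSkewAdjoint φ := by
  intro X Y
  have hY : Y = φ (φ Y) + η Y • ξ := by rw [hφ2]; abel
  calc g (φ X) Y = g (φ X) (φ (φ Y)) + η Y * g (φ X) ξ := by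
        conv_lhs => rw [hY]
        simp
    _ = - g X (φ Y) := by
        rw [hgφ, apply_reeb_eq_of_paracontact hφξ hηξ hgφ, hηφ, hηφ]; ring
    _ = g X ((-φ) Y) := by simp

theorem comp_self_eq_id_sub_smulRight (hφ2 : ∀ X : V, φ (φ X) = X - η X • ξ) :
    φ ∘ₗ φ = LinearMap.id - η.smulRight ξ := by
  ext X; simp [hφ2]

theorem trace_comp_self_of_paracontact [FiniteDimensional ℝ V] (hηξ : η ξ = 1)
    (hφ2 : ∀ X : V, φ (φ X) = X - η X • ξ) :
    LinearMap.trace ℝ V (φ ∘ₗ φ) = Module.finrank ℝ V - 1 := by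
  rw [comp_self_eq_id_sub_smulRight hφ2, map_sub, LinearMap.trace_id,
    LinearMap.trace_smulRight, hηξ]

/-- The curvature identity of a trans-para-Sasakian structure, read as an identity of
endomorphisms `Z ↦ R(Z, X)ξ`. -/
theorem applyₗ_reeb_comp_flip_eq (R : V →ₗ[ℝ] V →ₗ[ℝ] V →ₗ[ℝ] V) (α₀ β₀ : ℝ)
    (dα dβ : V →ₗ[ℝ] ℝ)
    (hTPS : ∀ X Y : V, R X Y ξ =
      -((α₀ ^ 2 + β₀ ^ 2) • (η Y • X - η X • Y))
      - (2 * α₀ * β₀) • (η Y • φ X - η X • φ Y)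
      - dα X • φ Y + dα Y • φ X + dβ Y • φ (φ X) - dβ X • φ (φ Y)) (X : V) :
    (LinearMap.applyₗ ξ).comp (R.flip X) =
      (-((α₀ ^ 2 + β₀ ^ 2) * η X)) • LinearMap.id
      + (α₀ ^ 2 + β₀ ^ 2) • η.smulRight X
      + (-(2 * α₀ * β₀ * η X)) • φ
      + (2 * α₀ * β₀) • η.smulRight (φ X)
      - dα.smulRight (φ X)
      + dα X • φ
      + dβ X • (φ ∘ₗ φ)
      - dβ.smulRight (φ (φ X)) := by
  ext Z
  simp only [LinearMap.comp_apply, LinearMap.flip_apply, LinearMap.add_apply,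
    LinearMap.sub_apply, LinearMap.smul_apply, LinearMap.smulRight_apply, LinearMap.id_apply,
    LinearMap.applyₗ_apply_apply, hTPS Z X]
  module

end AlmostParacontactMetric

theorem stmt_6
    (n : ℕ)
    (V : Type*) [AddCommGroup V] [Module ℝ V] [FiniteDimensional ℝ V]
    (hdim : Module.finrank ℝ V = 2 * n + 1)
    (g : LinearMap.BilinForm ℝ V)
    (hg_nondeg : g.Nondegenerate)
    (φ : V →ₗ[ℝ] V) (ξ : V) (η : V →ₗ[ℝ] ℝ)
    (hφξ : φ ξ = 0) (hηφ : ∀ X : V, η (φ X) = 0)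
    (hηξ : η ξ = 1) (hφ2 : ∀ X : V, φ (φ X) = X - η X • ξ)
    (hgφ : ∀ X Y : V, g (φ X) (φ Y) = - g X Y + η X * η Y)
    (R : V →ₗ[ℝ] V →ₗ[ℝ] V →ₗ[ℝ] V)
    (α₀ β₀ : ℝ) (dα dβ : V →ₗ[ℝ] ℝ)
    (hTPS : ∀ X Y : V, R X Y ξ =
      -((α₀ ^ 2 + β₀ ^ 2) • (η Y • X - η X • Y))
      - (2 * α₀ * β₀) • (η Y • φ X - η X • φ Y)
      - dα X • φ Y + dα Y • φ X + dβ Y • φ (φ X) - dβ X • φ (φ Y))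
    :
    ∀ X : V, Ric R X ξ =
      -(2 * (n : ℝ) * (α₀ ^ 2 + β₀ ^ 2) - dβ ξ) * η X
      + (2 * (n : ℝ) - 1) * dβ X - dα (φ X) := by
  intro X
  have htrφ : LinearMap.trace ℝ V φ = 0 := g.trace_eq_zero_of_isSkewAdjoint hg_nondeg
    (isSkewAdjoint_of_paracontact hφξ hηφ hηξ hφ2 hgφ)
  have htrφφ : LinearMap.trace ℝ V (φ ∘ₗ φ) = 2 * n := by
    rw [trace_comp_self_of_paracontact hηξ hφ2, hdim]; push_cast; ring
  rw [Ric, applyₗ_reeb_comp_flip_eq R α₀ β₀ dα dβ hTPS X]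
  simp only [map_add, map_sub, map_smul, LinearMap.trace_id, hdim, LinearMap.trace_smulRight,
    htrφ, htrφφ, smul_eq_mul, hηφ, hφ2 X]
  push_cast
  ring
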